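/- arXiv:1909.09888 — 2 statements merged into one kernel-verified Lean document; each statement's English description precedes it below -/
import Mathlib

section
/- For all integers d ≥ 1 and k with 0 < k < d/2, the identity c(k,d) + c(k-1,d-1) = C(d, d-2k)·c(k-1, 2k-1) holds, where c(k,d) := (1/(k+1))·C(d-k-1, k)·C(d+1, k). -/
open Nat

/-- `c k d` is the coefficient of `t^k` in the Kazhdan–Lusztig polynomial of the
uniform matroid `U_{1,d}`: `c(k,d) = (1/(k+1))·C(d-k-1,k)·C(d+1,k)`. -/
noncomputable def c (k d : ℕ) : ℚ :=
  (1 / (k + 1 : ℚ)) * (Nat.choose (d - k - 1) k) * (Nat.choose (d + 1) k)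

theorem uniform_KL_coeff_recursion (d k : ℕ) (hk : 0 < k) (hkd : 2 * k < d) :
    c k d + c (k - 1) (d - 1) = (Nat.choose d (d - 2 * k) : ℚ) * c (k - 1) (2 * k - 1) := by
  obtain ⟨j, rfl⟩ : ∃ j, k = j + 1 := ⟨k - 1, by omega⟩
  obtain ⟨t, rfl⟩ : ∃ t, d = 2 * j + t + 3 := ⟨d - (2 * j + 3), by omega⟩
  simp only [c]
  rw [show 2*j+t+3 - (j+1) - 1 = j+t+1 by omega,
      show j+1-1 = j by omega,
      show 2*j+t+3-1 = 2*j+t+2 by omega,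
      show 2*j+t+2 - j - 1 = j+t+1 by omega,
      show 2*j+t+3 - 2*(j+1) = t+1 by omega,
      show 2*(j+1)-1 = 2*j+1 by omega,
      show 2*j+1 - j - 1 = j by omega,
      show 2*j+t+2+1 = 2*j+t+3 by ring,
      show 2*j+1+1 = 2*j+2 by ring,
      show 2*j+t+3+1 = 2*j+t+4 by ring,
      Nat.choose_self]
  have e1 : ((j+t+1).choose (j+1) : ℚ) = (j+t+1)! / ((j+1)! * t !) := by
    rw [Nat.cast_choose ℚ (by omega), show j+t+1 - (j+1) = t by omega]
  have e2 : ((2*j+t+4).choose (j+1) : ℚ) = (2*j+t+4)! / ((j+1)! * (j+t+3)!) := by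
    rw [Nat.cast_choose ℚ (by omega), show 2*j+t+4 - (j+1) = j+t+3 by omega]
  have e3 : ((j+t+1).choose j : ℚ) = (j+t+1)! / (j ! * (t+1)!) := by
    rw [Nat.cast_choose ℚ (by omega), show j+t+1 - j = t+1 by omega]
  have e4 : ((2*j+t+3).choose j : ℚ) = (2*j+t+3)! / (j ! * (j+t+3)!) := by
    rw [Nat.cast_choose ℚ (by omega), show 2*j+t+3 - j = j+t+3 by omega]
  have e5 : ((2*j+t+3).choose (t+1) : ℚ) = (2*j+t+3)! / ((t+1)! * (2*j+2)!) := by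
    rw [Nat.cast_choose ℚ (by omega), show 2*j+t+3 - (t+1) = 2*j+2 by omega]
  have e6 : ((2*j+2).choose j : ℚ) = (2*j+2)! / (j ! * (j+2)!) := by
    rw [Nat.cast_choose ℚ (by omega), show 2*j+2 - j = j+2 by omega]
  rw [e1, e2, e3, e4, e5, e6]
  have f1 : ((2*j+t+4)! : ℚ) = (2*j+t+4) * (2*j+t+3)! := by
    rw [show 2*j+t+4 = (2*j+t+3)+1 from rfl, Nat.factorial_succ]; push_cast; ring
  have f2 : ((j+t+3)! : ℚ) = (j+t+3) * ((j+t+2) * (j+t+1)!) := by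
    rw [show j+t+3 = (j+t+2)+1 from rfl, Nat.factorial_succ,
        show j+t+2 = (j+t+1)+1 from rfl, Nat.factorial_succ]; push_cast; ring
  have f3 : ((t+1)! : ℚ) = (t+1) * t ! := by
    rw [Nat.factorial_succ]; push_cast; ring
  have f4 : ((j+1)! : ℚ) = (j+1) * j ! := by
    rw [Nat.factorial_succ]; push_cast; ring
  have f5 : ((j+2)! : ℚ) = (j+2) * ((j+1) * j !) := by
    rw [show j+2 = (j+1)+1 from rfl, Nat.factorial_succ, Nat.factorial_succ]; push_cast; ring
  rw [f1, f2, f3, f4, f5]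
  have n1 : (j ! : ℚ) ≠ 0 := by positivity
  have n2 : (t ! : ℚ) ≠ 0 := by positivity
  have n3 : ((j+t+1)! : ℚ) ≠ 0 := by positivity
  have n4 : ((2*j+t+3)! : ℚ) ≠ 0 := by positivity
  have n5 : ((2*j+2)! : ℚ) ≠ 0 := by positivity
  push_cast
  field_simp
  ring
end

section
/- Let p_m(t) denote the Kazhdan–Lusztig polynomial of the m-cycle, given explicitly by p_m(t) = Σ_{i=0}^{⌊(m-1)/2⌋} (1/(i+1))·C(m-i-2, i)·C(m, i)·t^i for m ≥ 2, with p_1(t) = 0 and p_0(t) = t⁻¹. Define Q(n,r)(t) = Σ_{k=0}^{r} (-t)^k · C(r,k) · p_{n+r-2k}(t). Then Q satisfies the recursion Q(n,r) = Q(n+1, r-1) - t·Q(n-1, r-1) for all n ≥ 1, r ≥ 1. -/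
/-!
The recursion has nothing to do with the cycle polynomials `p_m`: it holds for the sums
`Σ_k x^k C(r,k) f(n+r-2k)` over any sequence `f`, and is Pascal's rule
`C(r+1, k+1) = C(r, k+1) + C(r, k)` applied termwise.
-/

open LaurentPolynomial Finset

/-- `cyclePoly m` is the Kazhdan–Lusztig polynomial `p_m` of an `m`-cycle for `m ≥ 2`,
with the conventions `p_1 = 0` and `p_0 = t⁻¹`. -/
noncomputable def cyclePoly (m : ℕ) : LaurentPolynomial ℚ :=
  if m = 0 then T (-1)
  else if m = 1 then 0
  else ∑ i ∈ range ((m - 1) / 2 + 1),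
    C ((1 / (i + 1 : ℚ)) * (Nat.choose (m - i - 2) i) * (Nat.choose m i)) * T i

/-- `sawPoly n r = Q(n,r) = Σ_{k=0}^r (-t)^k C(r,k) p_{n+r-2k}`, the Kazhdan–Lusztig
polynomial of the partial saw graph `S_{n,r}`. -/
noncomputable def sawPoly (n r : ℕ) : LaurentPolynomial ℚ :=
  ∑ k ∈ range (r + 1), (-(T 1)) ^ k * (Nat.choose r k : LaurentPolynomial ℚ)
    * cyclePoly (n + r - 2 * k)

section BinomialShiftSum

variable {R : Type*} [CommSemiring R]

def binomialShiftSum (x : R) (f : ℕ → R) (n r : ℕ) : R :=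
  ∑ k ∈ range (r + 1), x ^ k * (r.choose k : R) * f (n + r - 2 * k)

lemma binomialShiftSum_eq_sum_range_succ (x : R) (f : ℕ → R) (n r : ℕ) :
    binomialShiftSum x f n r
      = ∑ k ∈ range (r + 2), x ^ k * (r.choose k : R) * f (n + r - 2 * k) := by
  rw [sum_range_succ _ (r + 1), Nat.choose_succ_self, Nat.cast_zero, mul_zero, zero_mul,
    add_zero, binomialShiftSum]

theorem binomialShiftSum_succ_succ (x : R) (f : ℕ → R) (n r : ℕ) :
    binomialShiftSum x f (n + 1) (r + 1)
      = binomialShiftSum x f (n + 2) r + x * binomialShiftSum x f n r := by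
  have hindex : ∀ j, n + 1 + (r + 1) - 2 * (j + 1) = n + r - 2 * j := fun j => by omega
  have hindex' : ∀ j, n + 2 + r - 2 * (j + 1) = n + r - 2 * j := fun j => by omega
  rw [binomialShiftSum_eq_sum_range_succ x f (n + 2), binomialShiftSum, binomialShiftSum,
    sum_range_succ', sum_range_succ' _ (r + 1), mul_sum]
  simp only [hindex, hindex', Nat.choose_succ_succ', Nat.cast_add, Nat.choose_zero_right]
  rw [show n + 1 + (r + 1) - 2 * 0 = n + 2 + r - 2 * 0 by omega,
    add_right_comm (∑ j ∈ range (r + 1), _), ← sum_add_distrib]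
  congr 1
  exact sum_congr rfl fun j _ => by ring

end BinomialShiftSum

theorem sawPoly_recursion (n r : ℕ) (hn : 1 ≤ n) (hr : 1 ≤ r) :
    sawPoly n r = sawPoly (n + 1) (r - 1) - T 1 * sawPoly (n - 1) (r - 1) := by
  obtain ⟨n, rfl⟩ := Nat.exists_eq_add_of_le' hn
  obtain ⟨r, rfl⟩ := Nat.exists_eq_add_of_le' hr
  change binomialShiftSum (-T 1) cyclePoly (n + 1) (r + 1)
    = binomialShiftSum (-T 1) cyclePoly (n + 1 + 1) (r + 1 - 1)
      - T 1 * binomialShiftSum (-T 1) cyclePoly (n + 1 - 1) (r + 1 - 1)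
  rw [binomialShiftSum_succ_succ, Nat.add_sub_cancel, Nat.add_sub_cancel]
  ring
end
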